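/- Let s ∈ (0, 1/2), let m be a positive integer, and let {f_α : α ∈ J} be a family of complex-valued functions on the closed upper half-plane {w ∈ ℂ : Im w ≥ 0} that is uniformly bounded and uniformly equicontinuous. Then sup over α ∈ J, κ ≥ 0 and E ∈ ℝ of the supremum norm of (T_{κ,E+iε,s}^m − T_{κ,E,s}^m) f_α tends to 0 as ε ↓ 0. -/

import Mathlib

open MeasureTheory Complex

/-- `φ⁺_{z,q}(w) = ½(−1/(w+(z−q₀)/√2) + (−1/(w+(z−q₁)/√2)))`; terms with vanishing
denominator are zero (automatic, since division by zero is zero). -/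
noncomputable def phiPlus (z : ℂ) (q : ℝ × ℝ) (w : ℂ) : ℂ :=
  (1 / 2) * (-1 / (w + (z - (q.1 : ℂ)) / (Real.sqrt 2 : ℂ))
    + -1 / (w + (z - (q.2 : ℂ)) / (Real.sqrt 2 : ℂ)))

/-- `φ⁻_{z,q}(w) = ½(−1/(w+(z−q₀)/√2) − (−1/(w+(z−q₁)/√2)))`. -/
noncomputable def phiMinus (z : ℂ) (q : ℝ × ℝ) (w : ℂ) : ℂ :=
  (1 / 2) * (-1 / (w + (z - (q.1 : ℂ)) / (Real.sqrt 2 : ℂ))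
    - -1 / (w + (z - (q.2 : ℂ)) / (Real.sqrt 2 : ℂ)))

/-- The transfer operator `T_{κ,z,s}` acting on bounded Borel functions on the closed upper
half-plane. -/
noncomputable def transferOpC (ν : ℝ → ℝ) (σ : Measure (ℝ × ℝ)) (κ : ℝ) (z : ℂ) (s : ℝ)
    (f : ℂ → ℂ) (w : ℂ) : ℂ :=
  ∫ p : ℝ × ℝ, (∫ r : ℝ, f (phiPlus z (r + κ * p.1, r + κ * p.2) w) *
    ((((norm (phiPlus z (r + κ * p.1, r + κ * p.2) w)) ^ s
      + (norm (phiMinus z (r + κ * p.1, r + κ * p.2) w)) ^ s) * ν r : ℝ) : ℂ)) ∂σ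

/-!
Write `T_{κ,z,s} g (w) = ∫ K g (aₚ) dσ(p)`, where `K g a = ∫ g(φ⁺) (|φ⁺|^s + |φ⁻|^s) ν(r) dr` and
`aₚ = (w + (z - κ p₀)/√2, w + (z - κ p₁)/√2)`: the two Möbius terms `-1/(aⱼ - r/√2)` of `φ^±`
depend on `(z, w)` only through `aₚ`, and moving `(z, w)` moves `aₚ` by a comparable amount.

Each Möbius term is at most `√2/|r - √2 Re aⱼ|`; as `s < 1` and `ν` is a bounded probability
density, the weight `|φ⁺|^s + |φ⁻|^s` has `ν`-integral bounded uniformly in `a`, so `T` is bounded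
on bounded functions uniformly in `κ, z`. If `a` moves by `t`, then away from the `R`-neighbourhoods
of the poles the Möbius terms move by `O(|t|/R²)` and the weight by `O((|t|/R²)^s)`, while the
neighbourhoods carry weight `O(R^{1-s})`. Taking first `R` and then `t` small, `T` maps a bounded
uniformly equicontinuous family to a family `(z, w) ↦ T_{κ,z} g (w)` that is uniformly
equicontinuous jointly in `(z, w)`. By induction this holds for `(z, w) ↦ T_{κ,z}^m f_α (w)`,
indexed by `(α, κ)`; the theorem compares the points `(E + iε, w)` and `(E, w)`.
-/

open Set Filter Topology Metric

theorem Metric.uniformEquicontinuousOn_iff {ι α β : Type*} [PseudoMetricSpace α]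
    [PseudoMetricSpace β] {F : ι → β → α} {S : Set β} :
    UniformEquicontinuousOn F S ↔ ∀ ε > 0, ∃ δ > 0, ∀ x ∈ S, ∀ y ∈ S, dist x y < δ →
      ∀ i, dist (F i x) (F i y) < ε := by
  rw [(uniformity_basis_dist.inf_principal (S ×ˢ S)).uniformEquicontinuousOn_iff
    uniformity_basis_dist]
  simp only [mem_inter_iff, mem_ofPred_eq, mem_prod]
  exact forall₂_congr fun ε _ => exists_congr fun δ => and_congr_right fun _ =>
    ⟨fun h x hx y hy hxy => h x y ⟨hxy, hx, hy⟩, fun h x y ⟨hxy, hx, hy⟩ => h x hx y hy hxy⟩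

theorem UniformEquicontinuousOn.slice {ι α β γ : Type*} [PseudoMetricSpace α]
    [PseudoMetricSpace β] [PseudoMetricSpace γ] {F : ι → β × γ → α} {S : Set β} {T : Set γ}
    (hF : UniformEquicontinuousOn F (S ×ˢ T)) :
    UniformEquicontinuousOn (fun (j : ι × S) (v : γ) => F j.1 (j.2, v)) T := by
  rw [Metric.uniformEquicontinuousOn_iff] at hF ⊢
  intro ε hε
  obtain ⟨δ, hδ, h⟩ := hF ε hε
  exact ⟨δ, hδ, fun v hv v' hv' hvv' j =>
    h _ ⟨j.2.2, hv⟩ _ ⟨j.2.2, hv'⟩ (by rwa [dist_prod_same_left]) j.1⟩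

theorem ContinuousOn.measurable_comp {α β γ : Type*} [MeasurableSpace α] [TopologicalSpace β]
    [MeasurableSpace β] [OpensMeasurableSpace β] [TopologicalSpace γ] [MeasurableSpace γ]
    [BorelSpace γ] {g : β → γ} {s : Set β} (hg : ContinuousOn g s) {φ : α → β}
    (hφ : Measurable φ) (hs : ∀ x, φ x ∈ s) : Measurable (fun x => g (φ x)) :=
  (continuousOn_iff_continuous_domRestrict.mp hg).measurable.comp (hφ.subtype_mk (h := hs))

lemma Real.abs_rpow_sub_rpow_le {s u v : ℝ} (hs0 : 0 ≤ s) (hs1 : s ≤ 1) (hu : 0 ≤ u) (hv : 0 ≤ v) :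
    |u ^ s - v ^ s| ≤ |u - v| ^ s := by
  wlog h : v ≤ u generalizing u v
  · rw [abs_sub_comm, abs_sub_comm u]; exact this hv hu (le_of_not_ge h)
  have key := Real.rpow_add_le_add_rpow (sub_nonneg.2 h) hv hs0 hs1
  rw [sub_add_cancel] at key
  rw [abs_of_nonneg (sub_nonneg.2 (Real.rpow_le_rpow hv h hs0)), abs_of_nonneg (sub_nonneg.2 h)]
  linarith

lemma abs_norm_rpow_sub_norm_rpow_le {E : Type*} [SeminormedAddCommGroup E] {s : ℝ} (hs0 : 0 ≤ s)
    (hs1 : s ≤ 1) (x y : E) :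
    |‖x‖ ^ s - ‖y‖ ^ s| ≤ ‖x - y‖ ^ s :=
  (Real.abs_rpow_sub_rpow_le hs0 hs1 (norm_nonneg x) (norm_nonneg y)).trans
    (Real.rpow_le_rpow (abs_nonneg _) (abs_norm_sub_norm_le x y) hs0)

lemma indicator_ball_abs_sub_rpow (s c ρ : ℝ) :
    (ball c ρ).indicator (fun r => |r - c| ^ (-s))
      = fun r => (Iio ρ).indicator (fun x => x ^ (-s)) |r - c| := by
  ext r
  by_cases h : |r - c| < ρ <;> simp [indicator, Real.dist_eq, h]

lemma integrableOn_ball_abs_sub_rpow_neg {s : ℝ} (hs : s < 1) (c ρ : ℝ) :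
    IntegrableOn (fun r => |r - c| ^ (-s)) (ball c ρ) := by
  have h0 : LocallyIntegrable (fun x : ℝ => |x - 0| ^ (-s)) :=
    locallyIntegrable_of_norm_le_rpow (C := 1) (by simp) (by simpa using hs)
      (ae_of_all _ fun x => by simp [Real.abs_rpow_of_nonneg])
      (by simpa using (continuous_abs.measurable.pow_const (-s)).aestronglyMeasurable)
  have h1 := (integrable_indicator_iff measurableSet_ball).2
      ((h0.integrableOn_isCompact (isCompact_closedBall 0 ρ)).mono_set ball_subset_closedBall)
  rw [indicator_ball_abs_sub_rpow] at h1
  rw [← integrable_indicator_iff measurableSet_ball, indicator_ball_abs_sub_rpow]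
  simpa using h1.comp_sub_right c

lemma integral_ball_abs_sub_rpow_neg {s : ℝ} (hs : s < 1) (c : ℝ) {ρ : ℝ} (hρ : 0 ≤ ρ) :
    ∫ r in ball c ρ, |r - c| ^ (-s) = 2 * ρ ^ (1 - s) / (1 - s) := by
  rw [← integral_indicator measurableSet_ball, indicator_ball_abs_sub_rpow,
    integral_sub_right_eq_self (fun r => (Iio ρ).indicator (fun x => x ^ (-s)) |r|) c,
    integral_comp_abs, ← integral_indicator measurableSet_Ioi, indicator_indicator,
    integral_indicator (measurableSet_Ioi.inter measurableSet_Iio), Ioi_inter_Iio,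
    ← integral_Ioc_eq_integral_Ioo, ← intervalIntegral.integral_of_le hρ,
    integral_rpow (Or.inl (by linarith)), Real.zero_rpow (by linarith)]
  ring_nf

structure IsBoundedProbDensity (ν : ℝ → ℝ) (C : ℝ) : Prop where
  nonneg : ∀ r, 0 ≤ ν r
  integral_eq_one : ∫ r, ν r = 1
  ae_le : ∀ᵐ r, ν r ≤ C

namespace IsBoundedProbDensity

variable {ν : ℝ → ℝ} {C s : ℝ}

-- A non-integrable function has Bochner integral `0`, so `∫ ν = 1` already forces integrability.
lemma integrable (hν : IsBoundedProbDensity ν C) : Integrable ν :=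
  Integrable.of_integral_ne_zero (by simp [hν.integral_eq_one])

lemma bound_nonneg (hν : IsBoundedProbDensity ν C) : 0 ≤ C := by
  obtain ⟨r, hr⟩ := hν.ae_le.exists
  exact (hν.nonneg r).trans hr

lemma setIntegral_le_mul_volume (hν : IsBoundedProbDensity ν C) {S : Set ℝ} (hS : volume S ≠ ⊤) :
    ∫ r in S, ν r ≤ C * volume.real S := by
  calc ∫ r in S, ν r ≤ ∫ _ in S, C :=
        integral_mono_ae hν.integrable.integrableOn (integrableOn_const hS)
          (ae_restrict_of_ae hν.ae_le)
    _ = C * volume.real S := by rw [setIntegral_const, smul_eq_mul, mul_comm]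

lemma integrable_abs_sub_rpow_neg_mul (hν : IsBoundedProbDensity ν C) (hs0 : 0 ≤ s) (hs1 : s < 1)
    (c : ℝ) : Integrable (fun r => |r - c| ^ (-s) * ν r) := by
  have hdom : Integrable fun r => C * (ball c 1).indicator (fun r => |r - c| ^ (-s)) r + ν r :=
    (((integrable_indicator_iff measurableSet_ball).2
      (integrableOn_ball_abs_sub_rpow_neg hs1 c 1)).const_mul C).add hν.integrable
  refine hdom.mono' (((continuous_abs.comp (continuous_sub_right c)).measurable.pow_const
    (-s)).aestronglyMeasurable.mul hν.integrable.aestronglyMeasurable) ?_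
  filter_upwards [hν.ae_le] with r hr
  have hpow := Real.rpow_nonneg (abs_nonneg (r - c)) (-s)
  rw [Real.norm_of_nonneg (mul_nonneg hpow (hν.nonneg r))]
  by_cases hrc : r ∈ ball c 1
  · rw [indicator_of_mem hrc]
    nlinarith [hν.nonneg r]
  · rw [indicator_of_notMem hrc]
    have : |r - c| ^ (-s) ≤ 1 := Real.rpow_le_one_of_one_le_of_nonpos
      (by simpa [Real.dist_eq] using hrc) (by linarith)
    nlinarith [hν.nonneg r]

lemma setIntegral_abs_sub_rpow_neg_mul_le (hν : IsBoundedProbDensity ν C) (hs0 : 0 ≤ s)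
    (hs1 : s < 1) (c : ℝ) {ρ : ℝ} (hρ : 0 < ρ) {S : Set ℝ} (hS : MeasurableSet S) :
    ∫ r in S, |r - c| ^ (-s) * ν r
      ≤ C * (2 * ρ ^ (1 - s) / (1 - s)) + ρ ^ (-s) * ∫ r in S, ν r := by
  have hint := hν.integrable_abs_sub_rpow_neg_mul hs0 hs1 c
  have hball := integrableOn_ball_abs_sub_rpow_neg hs1 c ρ
  have near : ∫ r in S ∩ ball c ρ, |r - c| ^ (-s) * ν r ≤ C * (2 * ρ ^ (1 - s) / (1 - s)) := by
    calc ∫ r in S ∩ ball c ρ, |r - c| ^ (-s) * ν r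
        ≤ ∫ r in S ∩ ball c ρ, C * |r - c| ^ (-s) :=
          integral_mono_ae hint.integrableOn ((hball.mono_set inter_subset_right).const_mul C)
            (by filter_upwards [ae_restrict_of_ae hν.ae_le] with r hr
                nlinarith [Real.rpow_nonneg (abs_nonneg (r - c)) (-s)])
      _ ≤ ∫ r in ball c ρ, C * |r - c| ^ (-s) :=
          setIntegral_mono_set (hball.const_mul C)
            (ae_of_all _ fun r => mul_nonneg hν.bound_nonneg (Real.rpow_nonneg (abs_nonneg _) _))
            inter_subset_right.eventuallyLE
      _ = C * (2 * ρ ^ (1 - s) / (1 - s)) := by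
          rw [integral_const_mul, integral_ball_abs_sub_rpow_neg hs1 c hρ.le]
  have far : ∫ r in S \ ball c ρ, |r - c| ^ (-s) * ν r ≤ ρ ^ (-s) * ∫ r in S, ν r := by
    calc ∫ r in S \ ball c ρ, |r - c| ^ (-s) * ν r ≤ ∫ r in S \ ball c ρ, ρ ^ (-s) * ν r := by
          refine setIntegral_mono_on hint.integrableOn (hν.integrable.integrableOn.const_mul _)
            (hS.diff measurableSet_ball) fun r hr => ?_
          have : ρ ≤ |r - c| := by simpa [Real.dist_eq] using hr.2
          exact mul_le_mul_of_nonneg_right (Real.rpow_le_rpow_of_nonpos hρ this (by linarith))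
            (hν.nonneg r)
      _ ≤ ρ ^ (-s) * ∫ r in S, ν r := by
          rw [integral_const_mul]
          exact mul_le_mul_of_nonneg_left (setIntegral_mono_set hν.integrable.integrableOn
            (ae_of_all _ hν.nonneg) sdiff_subset.eventuallyLE) (Real.rpow_nonneg hρ.le _)
  rw [← integral_inter_add_sdiff measurableSet_ball hint.integrableOn]
  exact add_le_add near far

end IsBoundedProbDensity

noncomputable section

def closedUpperHalfPlane : Set ℂ := {w | 0 ≤ w.im}

def mobiusTerm (a : ℂ) (r : ℝ) : ℂ := -1 / (a - r / √2)

def plusPart (a : ℂ × ℂ) (r : ℝ) : ℂ := 1 / 2 * (mobiusTerm a.1 r + mobiusTerm a.2 r)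

def minusPart (a : ℂ × ℂ) (r : ℝ) : ℂ := 1 / 2 * (mobiusTerm a.1 r - mobiusTerm a.2 r)

def weight (s : ℝ) (a : ℂ × ℂ) (r : ℝ) : ℝ := ‖plusPart a r‖ ^ s + ‖minusPart a r‖ ^ s

def kernelIntegrand (ν : ℝ → ℝ) (s : ℝ) (g : ℂ → ℂ) (a : ℂ × ℂ) (r : ℝ) : ℂ :=
  g (plusPart a r) * ((weight s a r * ν r : ℝ) : ℂ)

def kernelIntegral (ν : ℝ → ℝ) (s : ℝ) (g : ℂ → ℂ) (a : ℂ × ℂ) : ℂ :=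
  ∫ r, kernelIntegrand ν s g a r

def kernelArg (κ : ℝ) (x : ℂ × ℂ) (p : ℝ × ℝ) : ℂ × ℂ :=
  (x.2 + (x.1 - ↑(κ * p.1)) / √2, x.2 + (x.1 - ↑(κ * p.2)) / √2)

def nearPoles (a b : ℂ × ℂ) (R : ℝ) : Set ℝ :=
  ball (√2 * a.1.re) R ∪ ball (√2 * a.2.re) R ∪ ball (√2 * b.1.re) R ∪ ball (√2 * b.2.re) R

def weightIntegralBound (s C : ℝ) : ℝ := 4 * √2 ^ s * (2 * C / (1 - s) + 1)

end

local notation "ℍ₀" => closedUpperHalfPlane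

@[simp] lemma mem_closedUpperHalfPlane {w : ℂ} : w ∈ ℍ₀ ↔ 0 ≤ w.im := Iff.rfl

lemma transferOpC_eq (ν : ℝ → ℝ) (σ : Measure (ℝ × ℝ)) (κ : ℝ) (z : ℂ) (s : ℝ) (g : ℂ → ℂ)
    (w : ℂ) : transferOpC ν σ κ z s g w = ∫ p, kernelIntegral ν s g (kernelArg κ (z, w) p) ∂σ := by
  have h (x r : ℝ) : w + (z - ↑(r + x)) / √2 = w + (z - ↑x) / √2 - r / √2 := by push_cast; ring
  simp only [transferOpC, kernelIntegral, kernelIntegrand, weight, plusPart, minusPart, mobiusTerm,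
    kernelArg, phiPlus, phiMinus, h]

@[fun_prop] lemma measurable_mobiusTerm (a : ℂ) : Measurable (mobiusTerm a) := by
  unfold mobiusTerm; fun_prop

lemma measurable_plusPart (a : ℂ × ℂ) : Measurable (plusPart a) := by
  unfold plusPart; fun_prop

lemma measurable_weight (s : ℝ) (a : ℂ × ℂ) : Measurable (weight s a) := by
  unfold weight plusPart minusPart; fun_prop

lemma im_mobiusTerm_nonneg {a : ℂ} (ha : 0 ≤ a.im) (r : ℝ) : 0 ≤ (mobiusTerm a r).im := by
  have : (a - r / √2).im = a.im := by rw [sub_im, ← ofReal_div, ofReal_im, sub_zero]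
  rw [mobiusTerm, neg_div, one_div, neg_im, inv_im, this, neg_div, neg_neg]
  exact div_nonneg ha (normSq_nonneg _)

lemma plusPart_mem {a : ℂ × ℂ} (ha : a ∈ ℍ₀ ×ˢ ℍ₀) (r : ℝ) : plusPart a r ∈ ℍ₀ := by
  have h₁ := im_mobiusTerm_nonneg ha.1 r
  have h₂ := im_mobiusTerm_nonneg ha.2 r
  rw [mem_closedUpperHalfPlane, plusPart, show (1 / 2 : ℂ) = ((1 / 2 : ℝ) : ℂ) by norm_num,
    im_ofReal_mul, add_im]
  positivity

lemma abs_sub_sqrt_two_mul_re_le (a : ℂ) (r : ℝ) : |r - √2 * a.re| ≤ √2 * ‖a - r / √2‖ := by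
  have h2 : (0 : ℝ) < √2 := by positivity
  calc |r - √2 * a.re| = √2 * |(a - r / √2).re| := by
        rw [sub_re, ← ofReal_div, ofReal_re, ← abs_of_pos h2, ← abs_mul, abs_of_pos h2,
          abs_sub_comm, mul_sub, mul_div_cancel₀ _ h2.ne']
    _ ≤ √2 * ‖a - r / √2‖ := by gcongr; exact abs_re_le_norm _

lemma norm_mobiusTerm_le {a : ℂ} {r : ℝ} (h : r ≠ √2 * a.re) :
    ‖mobiusTerm a r‖ ≤ √2 * |r - √2 * a.re|⁻¹ := by
  have h2 : (0 : ℝ) < √2 := by positivity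
  have hpos : 0 < |r - √2 * a.re| := abs_pos.2 (sub_ne_zero.2 h)
  calc ‖mobiusTerm a r‖ = √2 * (√2 * ‖a - r / √2‖)⁻¹ := by
        rw [mobiusTerm, norm_div, norm_neg, norm_one, mul_inv, ← mul_assoc, mul_inv_cancel₀ h2.ne',
          one_mul, one_div]
    _ ≤ √2 * |r - √2 * a.re|⁻¹ := by
        gcongr
        exact abs_sub_sqrt_two_mul_re_le a r

lemma norm_mobiusTerm_sub_le {a b : ℂ} {r R : ℝ} (hR : 0 < R) (ha : R ≤ |r - √2 * a.re|)
    (hb : R ≤ |r - √2 * b.re|) : ‖mobiusTerm a r - mobiusTerm b r‖ ≤ 2 * ‖a - b‖ / R ^ 2 := by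
  have hu := ha.trans (abs_sub_sqrt_two_mul_re_le a r)
  have hv := hb.trans (abs_sub_sqrt_two_mul_re_le b r)
  have hu0 : a - r / √2 ≠ 0 := fun h => by simp [h] at hu; linarith
  have hv0 : b - r / √2 ≠ 0 := fun h => by simp [h] at hv; linarith
  have hprod : R ^ 2 ≤ 2 * (‖a - r / √2‖ * ‖b - r / √2‖) := by
    have := mul_le_mul hu hv hR.le (by positivity)
    nlinarith [Real.mul_self_sqrt (show (0 : ℝ) ≤ 2 by norm_num)]
  have heq : mobiusTerm a r - mobiusTerm b r = (a - b) / ((a - r / √2) * (b - r / √2)) := by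
    have key (u v : ℂ) (hu : u ≠ 0) (hv : v ≠ 0) : -1 / u - -1 / v = (u - v) / (u * v) := by
      field_simp
      ring
    rw [mobiusTerm, mobiusTerm, key _ _ hu0 hv0, sub_sub_sub_cancel_right]
  rw [heq, norm_div, norm_mul, div_le_div_iff₀ (by positivity) (by positivity)]
  nlinarith [norm_nonneg (a - b)]

lemma weight_nonneg (s : ℝ) (a : ℂ × ℂ) (r : ℝ) : 0 ≤ weight s a r := by
  unfold weight; positivity

lemma rpow_norm_half_mul_le {s : ℝ} (hs0 : 0 ≤ s) (hs1 : s ≤ 1) {u v x : ℂ}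
    (hx : ‖x‖ ≤ ‖u‖ + ‖v‖) : ‖1 / 2 * x‖ ^ s ≤ ‖u‖ ^ s + ‖v‖ ^ s := by
  calc ‖1 / 2 * x‖ ^ s ≤ (‖u‖ + ‖v‖) ^ s := by
        gcongr
        rw [norm_mul]
        norm_num
        linarith [norm_nonneg x]
    _ ≤ ‖u‖ ^ s + ‖v‖ ^ s := Real.rpow_add_le_add_rpow (norm_nonneg _) (norm_nonneg _) hs0 hs1

-- Only almost everywhere: at a pole the right-hand side has the junk value `|0| ^ (-s) = 0`.
lemma weight_ae_le {s : ℝ} (hs0 : 0 ≤ s) (hs1 : s ≤ 1) (a : ℂ × ℂ) :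
    ∀ᵐ r, weight s a r ≤ 2 * √2 ^ s * (|r - √2 * a.1.re| ^ (-s) + |r - √2 * a.2.re| ^ (-s)) := by
  filter_upwards [volume.ae_ne (√2 * a.1.re), volume.ae_ne (√2 * a.2.re)] with r h₁ h₂
  have hm {b : ℂ} (h : r ≠ √2 * b.re) : ‖mobiusTerm b r‖ ^ s ≤ √2 ^ s * |r - √2 * b.re| ^ (-s) := by
    calc ‖mobiusTerm b r‖ ^ s ≤ (√2 * |r - √2 * b.re|⁻¹) ^ s := by
          gcongr; exact norm_mobiusTerm_le h
      _ = √2 ^ s * |r - √2 * b.re| ^ (-s) := by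
          rw [Real.mul_rpow (by positivity) (by positivity), Real.inv_rpow (abs_nonneg _),
            Real.rpow_neg (abs_nonneg _)]
  have hp := rpow_norm_half_mul_le hs0 hs1 (norm_add_le (mobiusTerm a.1 r) (mobiusTerm a.2 r))
  have hn := rpow_norm_half_mul_le hs0 hs1 (norm_sub_le (mobiusTerm a.1 r) (mobiusTerm a.2 r))
  rw [weight, plusPart, minusPart]
  linarith [hm h₁, hm h₂]

lemma norm_plusPart_sub_le {a b : ℂ × ℂ} {r d : ℝ}
    (h₁ : ‖mobiusTerm a.1 r - mobiusTerm b.1 r‖ ≤ d)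
    (h₂ : ‖mobiusTerm a.2 r - mobiusTerm b.2 r‖ ≤ d) : ‖plusPart a r - plusPart b r‖ ≤ d := by
  have : plusPart a r - plusPart b r = 1 / 2 *
      ((mobiusTerm a.1 r - mobiusTerm b.1 r) + (mobiusTerm a.2 r - mobiusTerm b.2 r)) := by
    simp only [plusPart]; ring
  rw [this, norm_mul]
  norm_num
  linarith [norm_add_le (mobiusTerm a.1 r - mobiusTerm b.1 r) (mobiusTerm a.2 r - mobiusTerm b.2 r)]

lemma norm_minusPart_sub_le {a b : ℂ × ℂ} {r d : ℝ}
    (h₁ : ‖mobiusTerm a.1 r - mobiusTerm b.1 r‖ ≤ d)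
    (h₂ : ‖mobiusTerm a.2 r - mobiusTerm b.2 r‖ ≤ d) : ‖minusPart a r - minusPart b r‖ ≤ d := by
  have : minusPart a r - minusPart b r = 1 / 2 *
      ((mobiusTerm a.1 r - mobiusTerm b.1 r) - (mobiusTerm a.2 r - mobiusTerm b.2 r)) := by
    simp only [minusPart]; ring
  rw [this, norm_mul]
  norm_num
  linarith [norm_sub_le (mobiusTerm a.1 r - mobiusTerm b.1 r) (mobiusTerm a.2 r - mobiusTerm b.2 r)]

lemma abs_weight_sub_le {s : ℝ} (hs0 : 0 ≤ s) (hs1 : s ≤ 1) {a b : ℂ × ℂ} {r d : ℝ}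
    (h₁ : ‖mobiusTerm a.1 r - mobiusTerm b.1 r‖ ≤ d)
    (h₂ : ‖mobiusTerm a.2 r - mobiusTerm b.2 r‖ ≤ d) :
    |weight s a r - weight s b r| ≤ 2 * d ^ s := by
  have hp := (abs_norm_rpow_sub_norm_rpow_le hs0 hs1 (plusPart a r) (plusPart b r)).trans
    (Real.rpow_le_rpow (norm_nonneg _) (norm_plusPart_sub_le h₁ h₂) hs0)
  have hm := (abs_norm_rpow_sub_norm_rpow_le hs0 hs1 (minusPart a r) (minusPart b r)).trans
    (Real.rpow_le_rpow (norm_nonneg _) (norm_minusPart_sub_le h₁ h₂) hs0)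
  calc |weight s a r - weight s b r|
      = |(‖plusPart a r‖ ^ s - ‖plusPart b r‖ ^ s)
          + (‖minusPart a r‖ ^ s - ‖minusPart b r‖ ^ s)| := by
        rw [weight, weight]; ring_nf
    _ ≤ 2 * d ^ s := (abs_add_le _ _).trans (by linarith)

lemma measurableSet_nearPoles (a b : ℂ × ℂ) (R : ℝ) : MeasurableSet (nearPoles a b R) :=
  ((measurableSet_ball.union measurableSet_ball).union measurableSet_ball).union measurableSet_ball

lemma volume_nearPoles_le (a b : ℂ × ℂ) {R : ℝ} (hR : 0 ≤ R) :
    volume (nearPoles a b R) ≤ ENNReal.ofReal (8 * R) := by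
  have h8 : ENNReal.ofReal (8 * R) = ENNReal.ofReal (2 * R) + ENNReal.ofReal (2 * R)
      + ENNReal.ofReal (2 * R) + ENNReal.ofReal (2 * R) := by
    rw [← ENNReal.ofReal_add (by positivity) (by positivity),
      ← ENNReal.ofReal_add (by positivity) (by positivity),
      ← ENNReal.ofReal_add (by positivity) (by positivity)]
    ring_nf
  rw [h8, nearPoles]
  refine (measure_union_le _ _).trans (add_le_add ((measure_union_le _ _).trans
    (add_le_add ((measure_union_le _ _).trans (add_le_add ?_ ?_)) ?_)) ?_) <;>
  exact (Real.volume_ball _ _).le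

lemma norm_mobiusTerm_sub_le_of_notMem_nearPoles {a b : ℂ × ℂ} {R r : ℝ} (hR : 0 < R)
    (hr : r ∉ nearPoles a b R) :
    ‖mobiusTerm a.1 r - mobiusTerm b.1 r‖ ≤ 2 * dist a b / R ^ 2 ∧
      ‖mobiusTerm a.2 r - mobiusTerm b.2 r‖ ≤ 2 * dist a b / R ^ 2 := by
  simp only [nearPoles, mem_union, mem_ball, Real.dist_eq, not_or, not_lt] at hr
  obtain ⟨⟨⟨h₁, h₂⟩, h₃⟩, h₄⟩ := hr
  refine ⟨(norm_mobiusTerm_sub_le hR h₁ h₃).trans ?_,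
    (norm_mobiusTerm_sub_le hR h₂ h₄).trans ?_⟩ <;>
  gcongr <;> rw [← dist_eq_norm]
  exacts [le_max_left _ _, le_max_right _ _]

lemma kernelArg_mem {x : ℂ × ℂ} (hx : x ∈ ℍ₀ ×ˢ ℍ₀) (κ : ℝ) (p : ℝ × ℝ) :
    kernelArg κ x p ∈ ℍ₀ ×ˢ ℍ₀ := by
  have h (c : ℝ) : 0 ≤ (x.2 + (x.1 - c) / √2).im := by
    have : 0 ≤ x.1.im := hx.1
    have : 0 ≤ x.2.im := hx.2
    rw [add_im, div_ofReal_im, sub_im, ofReal_im, sub_zero]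
    positivity
  exact ⟨h _, h _⟩

lemma measurable_kernelArg (κ : ℝ) (x : ℂ × ℂ) : Measurable (kernelArg κ x) := by
  unfold kernelArg; fun_prop

lemma dist_kernelArg_le (κ : ℝ) (x y : ℂ × ℂ) (p : ℝ × ℝ) :
    dist (kernelArg κ x p) (kernelArg κ y p) ≤ 2 * dist x y := by
  have h (c : ℝ) : dist (x.2 + (x.1 - c) / √2) (y.2 + (y.1 - c) / √2) ≤ 2 * dist x y := by
    have hsq : (1 : ℝ) ≤ √2 := Real.one_le_sqrt.2 (by norm_num)
    have h₁ : ‖x.1 - y.1‖ ≤ dist x y := (dist_eq_norm x.1 y.1).symm.trans_le (le_max_left _ _)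
    have h₂ : ‖x.2 - y.2‖ ≤ dist x y := (dist_eq_norm x.2 y.2).symm.trans_le (le_max_right _ _)
    rw [dist_eq_norm, show x.2 + (x.1 - c) / √2 - (y.2 + (y.1 - c) / √2)
      = (x.2 - y.2) + (x.1 - y.1) / √2 by ring]
    refine (norm_add_le _ _).trans ?_
    rw [norm_div, norm_real, Real.norm_of_nonneg (by positivity)]
    have : ‖x.1 - y.1‖ / √2 ≤ ‖x.1 - y.1‖ := div_le_self (norm_nonneg _) hsq
    linarith
  exact max_le (h _) (h _)

lemma weightIntegralBound_nonneg {s C : ℝ} (hs1 : s < 1) (hC : 0 ≤ C) :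
    0 ≤ weightIntegralBound s C := by
  have : 0 < 1 - s := by linarith
  unfold weightIntegralBound; positivity

lemma nonneg_of_forall_norm_le {g : ℂ → ℂ} {M : ℝ} (hgM : ∀ w ∈ ℍ₀, ‖g w‖ ≤ M) : 0 ≤ M :=
  (norm_nonneg _).trans (hgM 0 (by simp))

namespace IsBoundedProbDensity

variable {ν : ℝ → ℝ} {C s M : ℝ} {g : ℂ → ℂ}

lemma integrable_weight_mul (hν : IsBoundedProbDensity ν C) (hs0 : 0 ≤ s) (hs1 : s < 1)
    (a : ℂ × ℂ) : Integrable (fun r => weight s a r * ν r) := by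
  refine (((hν.integrable_abs_sub_rpow_neg_mul hs0 hs1 (√2 * a.1.re)).add
    (hν.integrable_abs_sub_rpow_neg_mul hs0 hs1 (√2 * a.2.re))).const_mul (2 * √2 ^ s)).mono'
    ((measurable_weight s a).aestronglyMeasurable.mul hν.integrable.aestronglyMeasurable) ?_
  filter_upwards [weight_ae_le hs0 hs1.le a] with r hr
  rw [Real.norm_of_nonneg (mul_nonneg (weight_nonneg s a r) (hν.nonneg r))]
  simp only [Pi.add_apply]
  nlinarith [hν.nonneg r]

lemma setIntegral_weight_mul_le (hν : IsBoundedProbDensity ν C) (hs0 : 0 ≤ s) (hs1 : s < 1)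
    (a : ℂ × ℂ) {ρ : ℝ} (hρ : 0 < ρ) {S : Set ℝ} (hS : MeasurableSet S) :
    ∫ r in S, weight s a r * ν r
      ≤ 4 * √2 ^ s * (C * (2 * ρ ^ (1 - s) / (1 - s)) + ρ ^ (-s) * ∫ r in S, ν r) := by
  have h₁ := hν.integrable_abs_sub_rpow_neg_mul hs0 hs1 (√2 * a.1.re)
  have h₂ := hν.integrable_abs_sub_rpow_neg_mul hs0 hs1 (√2 * a.2.re)
  calc ∫ r in S, weight s a r * ν r
      ≤ ∫ r in S, 2 * √2 ^ s *
          (|r - √2 * a.1.re| ^ (-s) * ν r + |r - √2 * a.2.re| ^ (-s) * ν r) := by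
        refine integral_mono_ae (hν.integrable_weight_mul hs0 hs1 a).integrableOn
          ((h₁.add h₂).const_mul _).integrableOn ?_
        filter_upwards [ae_restrict_of_ae (weight_ae_le hs0 hs1.le a)] with r hr
        have := mul_le_mul_of_nonneg_right hr (hν.nonneg r)
        linarith
    _ ≤ 4 * √2 ^ s * (C * (2 * ρ ^ (1 - s) / (1 - s)) + ρ ^ (-s) * ∫ r in S, ν r) := by
        rw [integral_const_mul, integral_add h₁.integrableOn h₂.integrableOn]
        have := hν.setIntegral_abs_sub_rpow_neg_mul_le hs0 hs1 (√2 * a.1.re) hρ hS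
        have := hν.setIntegral_abs_sub_rpow_neg_mul_le hs0 hs1 (√2 * a.2.re) hρ hS
        have : 0 ≤ √2 ^ s := by positivity
        nlinarith

lemma integral_weight_mul_le (hν : IsBoundedProbDensity ν C) (hs0 : 0 ≤ s) (hs1 : s < 1)
    (a : ℂ × ℂ) : ∫ r, weight s a r * ν r ≤ weightIntegralBound s C := by
  have := hν.setIntegral_weight_mul_le hs0 hs1 a one_pos MeasurableSet.univ
  simp only [Measure.restrict_univ, Real.one_rpow, hν.integral_eq_one] at this
  exact this.trans_eq (by rw [weightIntegralBound]; ring)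

lemma setIntegral_weight_mul_le_of_volume_le (hν : IsBoundedProbDensity ν C) (hs0 : 0 ≤ s)
    (hs1 : s < 1) (a : ℂ × ℂ) {k R : ℝ} (hk : 0 ≤ k) (hR : 0 < R) {S : Set ℝ} (hS : MeasurableSet S)
    (hvol : volume S ≤ ENNReal.ofReal (k * R)) :
    ∫ r in S, weight s a r * ν r ≤ 4 * √2 ^ s * C * (2 / (1 - s) + k) * R ^ (1 - s) := by
  have hk : volume.real S ≤ k * R := ENNReal.toReal_le_of_le_ofReal (by positivity) hvol
  have hν' := hν.setIntegral_le_mul_volume (ne_top_of_le_ne_top ENNReal.ofReal_ne_top hvol)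
  have hRs : R ^ (-s) * R = R ^ (1 - s) := by
    rw [sub_eq_neg_add, Real.rpow_add hR, Real.rpow_one]
  calc ∫ r in S, weight s a r * ν r
      ≤ 4 * √2 ^ s * (C * (2 * R ^ (1 - s) / (1 - s)) + R ^ (-s) * ∫ r in S, ν r) :=
        hν.setIntegral_weight_mul_le hs0 hs1 a hR hS
    _ ≤ 4 * √2 ^ s * (C * (2 * R ^ (1 - s) / (1 - s)) + R ^ (-s) * (C * (k * R))) := by
        gcongr
        exact hν'.trans (mul_le_mul_of_nonneg_left hk hν.bound_nonneg)
    _ = 4 * √2 ^ s * C * (2 / (1 - s) + k) * R ^ (1 - s) := by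
        rw [← hRs]; ring

lemma norm_kernelIntegrand_le (hν : IsBoundedProbDensity ν C) (hgM : ∀ w ∈ ℍ₀, ‖g w‖ ≤ M)
    (ha : a ∈ ℍ₀ ×ˢ ℍ₀) (r : ℝ) : ‖kernelIntegrand ν s g a r‖ ≤ M * (weight s a r * ν r) := by
  have hW : 0 ≤ weight s a r * ν r := mul_nonneg (weight_nonneg s a r) (hν.nonneg r)
  rw [kernelIntegrand, norm_mul, norm_real, Real.norm_of_nonneg hW]
  exact mul_le_mul_of_nonneg_right (hgM _ (plusPart_mem ha r)) hW

lemma integrable_kernelIntegrand (hν : IsBoundedProbDensity ν C) (hs0 : 0 ≤ s) (hs1 : s < 1)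
    (hgM : ∀ w ∈ ℍ₀, ‖g w‖ ≤ M) (hgc : ContinuousOn g ℍ₀) (ha : a ∈ ℍ₀ ×ˢ ℍ₀) :
    Integrable (kernelIntegrand ν s g a) := by
  refine ((hν.integrable_weight_mul hs0 hs1 a).const_mul M).mono' ?_
    (ae_of_all _ (hν.norm_kernelIntegrand_le hgM ha))
  exact (hgc.measurable_comp (measurable_plusPart a) (plusPart_mem ha)).aestronglyMeasurable.mul
    (continuous_ofReal.comp_aestronglyMeasurable
      ((measurable_weight s a).aestronglyMeasurable.mul hν.integrable.aestronglyMeasurable))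

lemma norm_kernelIntegral_le (hν : IsBoundedProbDensity ν C) (hs0 : 0 ≤ s) (hs1 : s < 1)
    (hgM : ∀ w ∈ ℍ₀, ‖g w‖ ≤ M) (ha : a ∈ ℍ₀ ×ˢ ℍ₀) :
    ‖kernelIntegral ν s g a‖ ≤ M * weightIntegralBound s C := by
  calc ‖kernelIntegral ν s g a‖ ≤ ∫ r, M * (weight s a r * ν r) :=
        norm_integral_le_of_norm_le ((hν.integrable_weight_mul hs0 hs1 a).const_mul M)
          (ae_of_all _ (hν.norm_kernelIntegrand_le hgM ha))
    _ ≤ M * weightIntegralBound s C := by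
        rw [integral_const_mul]
        exact mul_le_mul_of_nonneg_left (hν.integral_weight_mul_le hs0 hs1 a)
          (nonneg_of_forall_norm_le hgM)

lemma kernelIntegral_sub (hν : IsBoundedProbDensity ν C) (hs0 : 0 ≤ s) (hs1 : s < 1)
    {g' : ℂ → ℂ} {M' : ℝ} (hgM : ∀ w ∈ ℍ₀, ‖g w‖ ≤ M) (hg'M : ∀ w ∈ ℍ₀, ‖g' w‖ ≤ M')
    (hgc : ContinuousOn g ℍ₀) (hg'c : ContinuousOn g' ℍ₀) (ha : a ∈ ℍ₀ ×ˢ ℍ₀) :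
    kernelIntegral ν s g a - kernelIntegral ν s g' a = kernelIntegral ν s (g - g') a := by
  rw [kernelIntegral, kernelIntegral, kernelIntegral, ← integral_sub
    (hν.integrable_kernelIntegrand hs0 hs1 hgM hgc ha)
    (hν.integrable_kernelIntegrand hs0 hs1 hg'M hg'c ha)]
  simp only [kernelIntegrand, Pi.sub_apply, sub_mul]

lemma norm_kernelIntegrand_sub_le (hν : IsBoundedProbDensity ν C) (hs0 : 0 ≤ s) (hs1 : s ≤ 1)
    (hgM : ∀ w ∈ ℍ₀, ‖g w‖ ≤ M) {a b : ℂ × ℂ} (hb : b ∈ ℍ₀ ×ˢ ℍ₀) {r ε₁ d : ℝ}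
    (hg : ‖g (plusPart a r) - g (plusPart b r)‖ ≤ ε₁)
    (h₁ : ‖mobiusTerm a.1 r - mobiusTerm b.1 r‖ ≤ d)
    (h₂ : ‖mobiusTerm a.2 r - mobiusTerm b.2 r‖ ≤ d) :
    ‖kernelIntegrand ν s g a r - kernelIntegrand ν s g b r‖
      ≤ (ε₁ * weight s a r + 2 * M * d ^ s) * ν r := by
  have hW := weight_nonneg s a r
  have hνr := hν.nonneg r
  have hsplit : kernelIntegrand ν s g a r - kernelIntegrand ν s g b r
      = (g (plusPart a r) - g (plusPart b r)) * ((weight s a r * ν r : ℝ) : ℂ)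
        + g (plusPart b r) * (((weight s a r - weight s b r) * ν r : ℝ) : ℂ) := by
    simp only [kernelIntegrand]; push_cast; ring
  rw [hsplit]
  refine (norm_add_le _ _).trans ?_
  rw [norm_mul, norm_mul, norm_real, norm_real, Real.norm_of_nonneg (mul_nonneg hW hνr),
    Real.norm_eq_abs, abs_mul, abs_of_nonneg hνr]
  have := mul_le_mul (hgM _ (plusPart_mem hb r)) (abs_weight_sub_le hs0 hs1 h₁ h₂)
    (abs_nonneg _) (nonneg_of_forall_norm_le hgM)
  nlinarith [mul_le_mul_of_nonneg_right hg hW, norm_nonneg (g (plusPart a r) - g (plusPart b r))]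

lemma setIntegral_nearPoles_norm_kernelIntegrand_sub_le (hν : IsBoundedProbDensity ν C)
    (hs0 : 0 ≤ s) (hs1 : s < 1) (hgM : ∀ w ∈ ℍ₀, ‖g w‖ ≤ M) (hgc : ContinuousOn g ℍ₀)
    {a b : ℂ × ℂ} (ha : a ∈ ℍ₀ ×ˢ ℍ₀) (hb : b ∈ ℍ₀ ×ˢ ℍ₀) {R : ℝ} (hR : 0 < R) :
    ∫ r in nearPoles a b R, ‖kernelIntegrand ν s g a r - kernelIntegrand ν s g b r‖
      ≤ 2 * M * (4 * √2 ^ s * C * (2 / (1 - s) + 8) * R ^ (1 - s)) := by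
  have hWa := (hν.integrable_weight_mul hs0 hs1 a).const_mul M
  have hWb := (hν.integrable_weight_mul hs0 hs1 b).const_mul M
  have hD := ((hν.integrable_kernelIntegrand hs0 hs1 hgM hgc ha).sub
    (hν.integrable_kernelIntegrand hs0 hs1 hgM hgc hb)).norm
  have hvol := volume_nearPoles_le a b hR.le
  have hS := measurableSet_nearPoles a b R
  calc ∫ r in nearPoles a b R, ‖kernelIntegrand ν s g a r - kernelIntegrand ν s g b r‖
      ≤ ∫ r in nearPoles a b R, (M * (weight s a r * ν r) + M * (weight s b r * ν r)) :=
        setIntegral_mono hD.integrableOn (hWa.add hWb).integrableOn fun r =>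
          (norm_sub_le _ _).trans (add_le_add (hν.norm_kernelIntegrand_le hgM ha r)
            (hν.norm_kernelIntegrand_le hgM hb r))
    _ ≤ 2 * M * (4 * √2 ^ s * C * (2 / (1 - s) + 8) * R ^ (1 - s)) := by
        rw [integral_add hWa.integrableOn hWb.integrableOn, integral_const_mul, integral_const_mul]
        have := hν.setIntegral_weight_mul_le_of_volume_le hs0 hs1 a (by norm_num) hR hS hvol
        have := hν.setIntegral_weight_mul_le_of_volume_le hs0 hs1 b (by norm_num) hR hS hvol
        nlinarith [nonneg_of_forall_norm_le hgM]

lemma setIntegral_compl_nearPoles_norm_kernelIntegrand_sub_le (hν : IsBoundedProbDensity ν C)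
    (hs0 : 0 ≤ s) (hs1 : s < 1) (hgM : ∀ w ∈ ℍ₀, ‖g w‖ ≤ M) (hgc : ContinuousOn g ℍ₀)
    {δ ε₁ : ℝ} (hmod : ∀ u ∈ ℍ₀, ∀ v ∈ ℍ₀, dist u v < δ → dist (g u) (g v) < ε₁)
    {a b : ℂ × ℂ} (ha : a ∈ ℍ₀ ×ˢ ℍ₀) (hb : b ∈ ℍ₀ ×ˢ ℍ₀) {R : ℝ} (hR : 0 < R)
    (hab : 2 * dist a b / R ^ 2 < δ) :
    ∫ r in (nearPoles a b R)ᶜ, ‖kernelIntegrand ν s g a r - kernelIntegrand ν s g b r‖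
      ≤ ε₁ * weightIntegralBound s C + 2 * M * (2 * dist a b / R ^ 2) ^ s := by
  set d := 2 * dist a b / R ^ 2
  have hε₁ : 0 ≤ ε₁ := (dist_nonneg.trans_lt (hmod 0 (by simp) 0 (by simp)
    (by simpa using (by positivity : 0 ≤ d).trans_lt hab))).le
  have hWa := hν.integrable_weight_mul hs0 hs1 a
  have hD := ((hν.integrable_kernelIntegrand hs0 hs1 hgM hgc ha).sub
    (hν.integrable_kernelIntegrand hs0 hs1 hgM hgc hb)).norm
  have hG : Integrable fun r => ε₁ * (weight s a r * ν r) + 2 * M * d ^ s * ν r :=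
    (hWa.const_mul ε₁).add (hν.integrable.const_mul _)
  calc ∫ r in (nearPoles a b R)ᶜ, ‖kernelIntegrand ν s g a r - kernelIntegrand ν s g b r‖
      ≤ ∫ r in (nearPoles a b R)ᶜ, (ε₁ * (weight s a r * ν r) + 2 * M * d ^ s * ν r) := by
        refine setIntegral_mono_on hD.integrableOn hG.integrableOn
          (measurableSet_nearPoles a b R).compl fun r hr => ?_
        obtain ⟨h₁, h₂⟩ := norm_mobiusTerm_sub_le_of_notMem_nearPoles hR hr
        have hg := hmod _ (plusPart_mem ha r) _ (plusPart_mem hb r)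
          (by rw [dist_eq_norm]; exact (norm_plusPart_sub_le h₁ h₂).trans_lt hab)
        rw [dist_eq_norm] at hg
        have := hν.norm_kernelIntegrand_sub_le hs0 hs1.le hgM hb hg.le h₁ h₂
        linarith
    _ ≤ ∫ r, (ε₁ * (weight s a r * ν r) + 2 * M * d ^ s * ν r) :=
        setIntegral_le_integral hG (ae_of_all _ fun r => by
          have := hν.nonneg r
          have := weight_nonneg s a r
          have := nonneg_of_forall_norm_le hgM
          positivity)
    _ ≤ ε₁ * weightIntegralBound s C + 2 * M * d ^ s := by
        rw [integral_add (hWa.const_mul ε₁) (hν.integrable.const_mul _), integral_const_mul,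
          integral_const_mul, hν.integral_eq_one, mul_one]
        gcongr
        exact hν.integral_weight_mul_le hs0 hs1 a

lemma dist_kernelIntegral_le (hν : IsBoundedProbDensity ν C) (hs0 : 0 ≤ s) (hs1 : s < 1)
    (hgM : ∀ w ∈ ℍ₀, ‖g w‖ ≤ M) (hgc : ContinuousOn g ℍ₀) {δ ε₁ : ℝ}
    (hmod : ∀ u ∈ ℍ₀, ∀ v ∈ ℍ₀, dist u v < δ → dist (g u) (g v) < ε₁)
    {a b : ℂ × ℂ} (ha : a ∈ ℍ₀ ×ˢ ℍ₀) (hb : b ∈ ℍ₀ ×ˢ ℍ₀) {R : ℝ} (hR : 0 < R)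
    (hab : 2 * dist a b / R ^ 2 < δ) :
    dist (kernelIntegral ν s g a) (kernelIntegral ν s g b)
      ≤ ε₁ * weightIntegralBound s C + 2 * M * (2 * dist a b / R ^ 2) ^ s
        + 2 * M * (4 * √2 ^ s * C * (2 / (1 - s) + 8) * R ^ (1 - s)) := by
  have hKa := hν.integrable_kernelIntegrand hs0 hs1 hgM hgc ha
  have hKb := hν.integrable_kernelIntegrand hs0 hs1 hgM hgc hb
  rw [dist_eq_norm, kernelIntegral, kernelIntegral, ← integral_sub hKa hKb]
  refine (norm_integral_le_integral_norm _).trans ?_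
  have hD : Integrable fun r => ‖kernelIntegrand ν s g a r - kernelIntegrand ν s g b r‖ :=
    (hKa.sub hKb).norm
  rw [← integral_add_compl (measurableSet_nearPoles a b R) hD]
  linarith [hν.setIntegral_nearPoles_norm_kernelIntegrand_sub_le hs0 hs1 hgM hgc ha hb hR,
    hν.setIntegral_compl_nearPoles_norm_kernelIntegrand_sub_le hs0 hs1 hgM hgc hmod ha hb hR hab]

theorem uniformEquicontinuousOn_kernelIntegral (hν : IsBoundedProbDensity ν C) (hs0 : 0 < s)
    (hs1 : s < 1) {ι : Type*} {G : ι → ℂ → ℂ} (hGM : ∀ i, ∀ w ∈ ℍ₀, ‖G i w‖ ≤ M)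
    (hG : UniformEquicontinuousOn G ℍ₀) :
    UniformEquicontinuousOn (fun i => kernelIntegral ν s (G i)) (ℍ₀ ×ˢ ℍ₀) := by
  have hGc i : ContinuousOn (G i) ℍ₀ := (hG.uniformContinuousOn i).continuousOn
  rw [Metric.uniformEquicontinuousOn_iff] at hG ⊢
  intro ε hε
  set W := weightIntegralBound s C
  set c := 4 * √2 ^ s * C * (2 / (1 - s) + 8)
  have hW : 0 ≤ W := weightIntegralBound_nonneg hs1 hν.bound_nonneg
  obtain ⟨δ, hδ, hmod⟩ := hG (ε / (3 * (W + 1))) (by positivity)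
  obtain ⟨R, hRε, hR⟩ : ∃ R, 2 * M * (c * R ^ (1 - s)) < ε / 3 ∧ 0 < R := by
    have : Tendsto (fun R : ℝ => 2 * M * (c * R ^ (1 - s))) (𝓝[>] 0) (𝓝 0) := by
      have := ((Real.continuous_rpow_const (by linarith : 0 ≤ 1 - s)).tendsto 0).const_mul c
        |>.const_mul (2 * M)
      rw [Real.zero_rpow (by linarith), mul_zero, mul_zero] at this
      exact this.mono_left nhdsWithin_le_nhds
    exact ((this.eventually (gt_mem_nhds (by positivity))).and self_mem_nhdsWithin).exists
  obtain ⟨η, hη, hτ⟩ : ∃ η > 0, ∀ τ : ℝ, dist τ 0 < η →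
      2 * τ / R ^ 2 < δ ∧ 2 * M * (2 * τ / R ^ 2) ^ s < ε / 3 := by
    have h₁ : Tendsto (fun τ : ℝ => 2 * τ / R ^ 2) (𝓝 0) (𝓝 0) := by
      simpa using ((continuous_const_mul 2).div_const (R ^ 2)).tendsto (0 : ℝ)
    have h₂ : Tendsto (fun τ : ℝ => 2 * M * (2 * τ / R ^ 2) ^ s) (𝓝 0) (𝓝 0) := by
      have := ((Real.continuous_rpow_const hs0.le).tendsto 0).comp h₁ |>.const_mul (2 * M)
      rwa [Real.zero_rpow hs0.ne', mul_zero] at this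
    exact Metric.eventually_nhds_iff.1
      ((h₁.eventually (gt_mem_nhds hδ)).and (h₂.eventually (gt_mem_nhds (by positivity))))
  refine ⟨η, hη, fun a ha b hb hab i => ?_⟩
  obtain ⟨hτδ, hτε⟩ := hτ (dist a b) (by simpa [abs_of_nonneg dist_nonneg] using hab)
  have hε₁ : ε / (3 * (W + 1)) * W < ε / 3 := by
    rw [div_mul_eq_mul_div, div_lt_div_iff₀ (by positivity) (by norm_num)]
    nlinarith
  have := hν.dist_kernelIntegral_le hs0.le hs1 (hGM i) (hGc i)
    (fun u hu v hv huv => hmod u hu v hv huv i) ha hb hR hτδ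
  linarith

lemma continuousOn_kernelIntegral (hν : IsBoundedProbDensity ν C) (hs0 : 0 < s) (hs1 : s < 1)
    (hgM : ∀ w ∈ ℍ₀, ‖g w‖ ≤ M) (hg : UniformContinuousOn g ℍ₀) :
    ContinuousOn (kernelIntegral ν s g) (ℍ₀ ×ˢ ℍ₀) :=
  ((hν.uniformEquicontinuousOn_kernelIntegral hs0 hs1 (G := fun _ : Unit => g) (fun _ => hgM)
    (uniformEquicontinuousOn_unique.2 hg)).uniformContinuousOn ()).continuousOn

lemma integrable_kernelIntegral_kernelArg (hν : IsBoundedProbDensity ν C) (hs0 : 0 < s)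
    (hs1 : s < 1) (σ : Measure (ℝ × ℝ)) [IsFiniteMeasure σ] (hgM : ∀ w ∈ ℍ₀, ‖g w‖ ≤ M)
    (hg : UniformContinuousOn g ℍ₀) {x : ℂ × ℂ} (hx : x ∈ ℍ₀ ×ˢ ℍ₀) (κ : ℝ) :
    Integrable (fun p => kernelIntegral ν s g (kernelArg κ x p)) σ :=
  Integrable.of_bound ((hν.continuousOn_kernelIntegral hs0 hs1 hgM hg).measurable_comp
      (measurable_kernelArg κ x) (kernelArg_mem hx κ)).aestronglyMeasurable _
    (ae_of_all _ fun p => hν.norm_kernelIntegral_le hs0.le hs1 hgM (kernelArg_mem hx κ p))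

lemma norm_transferOpC_le (hν : IsBoundedProbDensity ν C) (hs0 : 0 ≤ s) (hs1 : s < 1)
    (σ : Measure (ℝ × ℝ)) [IsProbabilityMeasure σ] (hgM : ∀ w ∈ ℍ₀, ‖g w‖ ≤ M)
    {x : ℂ × ℂ} (hx : x ∈ ℍ₀ ×ˢ ℍ₀) (κ : ℝ) :
    ‖transferOpC ν σ κ x.1 s g x.2‖ ≤ M * weightIntegralBound s C := by
  rw [transferOpC_eq]
  simpa using norm_integral_le_of_norm_le_const (μ := σ)
    (ae_of_all _ fun p => hν.norm_kernelIntegral_le hs0 hs1 hgM (kernelArg_mem hx κ p))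

lemma transferOpC_sub (hν : IsBoundedProbDensity ν C) (hs0 : 0 < s) (hs1 : s < 1)
    (σ : Measure (ℝ × ℝ)) [IsFiniteMeasure σ] {g' : ℂ → ℂ} {M' : ℝ}
    (hgM : ∀ w ∈ ℍ₀, ‖g w‖ ≤ M) (hg'M : ∀ w ∈ ℍ₀, ‖g' w‖ ≤ M')
    (hg : UniformContinuousOn g ℍ₀) (hg' : UniformContinuousOn g' ℍ₀)
    {x : ℂ × ℂ} (hx : x ∈ ℍ₀ ×ˢ ℍ₀) (κ : ℝ) :
    transferOpC ν σ κ x.1 s g x.2 - transferOpC ν σ κ x.1 s g' x.2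
      = transferOpC ν σ κ x.1 s (g - g') x.2 := by
  rw [transferOpC_eq, transferOpC_eq, transferOpC_eq, ← integral_sub
    (hν.integrable_kernelIntegral_kernelArg hs0 hs1 σ hgM hg hx κ)
    (hν.integrable_kernelIntegral_kernelArg hs0 hs1 σ hg'M hg' hx κ)]
  exact integral_congr_ae (ae_of_all _ fun p => hν.kernelIntegral_sub hs0.le hs1 hgM hg'M
    hg.continuousOn hg'.continuousOn (kernelArg_mem hx κ p))

theorem uniformEquicontinuousOn_transferOpC (hν : IsBoundedProbDensity ν C) (hs0 : 0 < s)
    (hs1 : s < 1) (σ : Measure (ℝ × ℝ)) [IsProbabilityMeasure σ] {ι : Type*}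
    {G : ι → ℂ → ℂ} (κ : ι → ℝ) (hGM : ∀ i, ∀ w ∈ ℍ₀, ‖G i w‖ ≤ M)
    (hG : UniformEquicontinuousOn G ℍ₀) :
    UniformEquicontinuousOn (fun i (x : ℂ × ℂ) => transferOpC ν σ (κ i) x.1 s (G i) x.2)
      (ℍ₀ ×ˢ ℍ₀) := by
  have hK := hν.uniformEquicontinuousOn_kernelIntegral hs0 hs1 hGM hG
  rw [Metric.uniformEquicontinuousOn_iff] at hK ⊢
  intro ε hε
  obtain ⟨δ, hδ, hKδ⟩ := hK (ε / 2) (by positivity)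
  refine ⟨δ / 2, by positivity, fun x hx y hy hxy i => ?_⟩
  have hint {x} (hx : x ∈ ℍ₀ ×ˢ ℍ₀) := hν.integrable_kernelIntegral_kernelArg hs0 hs1 σ (hGM i)
    (hG.uniformContinuousOn i) hx (κ i)
  rw [dist_eq_norm, transferOpC_eq, transferOpC_eq, ← integral_sub (hint hx) (hint hy)]
  refine lt_of_le_of_lt ?_ (half_lt_self hε)
  have hp (p : ℝ × ℝ) : ‖kernelIntegral ν s (G i) (kernelArg (κ i) x p)
      - kernelIntegral ν s (G i) (kernelArg (κ i) y p)‖ ≤ ε / 2 := by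
    rw [← dist_eq_norm]
    exact (hKδ _ (kernelArg_mem hx _ p) _ (kernelArg_mem hy _ p)
      (by linarith [dist_kernelArg_le (κ i) x y p]) i).le
  simpa using norm_integral_le_of_norm_le_const (μ := σ) (ae_of_all _ hp)

theorem uniformEquicontinuousOn_transferOpC_slice (hν : IsBoundedProbDensity ν C)
    (hs0 : 0 < s) (hs1 : s < 1) (σ : Measure (ℝ × ℝ)) [IsProbabilityMeasure σ] {ι : Type*}
    {G : ι → ℂ × ℂ → ℂ} (κ : ι → ℝ)
    (hGM : ∀ i, ∀ x ∈ ℍ₀ ×ˢ ℍ₀, ‖G i x‖ ≤ M) (hG : UniformEquicontinuousOn G (ℍ₀ ×ˢ ℍ₀)) :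
    UniformEquicontinuousOn
      (fun i (x : ℂ × ℂ) => transferOpC ν σ (κ i) x.1 s (fun v => G i (x.1, v)) x.2)
      (ℍ₀ ×ˢ ℍ₀) := by
  set W := weightIntegralBound s C
  have hW : 0 ≤ W := weightIntegralBound_nonneg hs1 hν.bound_nonneg
  have hslice := hG.slice
  have hsliceM (j : ι × ℍ₀) : ∀ v ∈ ℍ₀, ‖G j.1 (j.2, v)‖ ≤ M := fun v hv => hGM _ _ ⟨j.2.2, hv⟩
  have hT := hν.uniformEquicontinuousOn_transferOpC hs0 hs1 σ (fun j : ι × ℍ₀ => κ j.1) hsliceM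
    hslice
  rw [Metric.uniformEquicontinuousOn_iff] at hG hT ⊢
  intro ε hε
  obtain ⟨δ₁, hδ₁, h₁⟩ := hG (ε / (2 * (W + 1))) (by positivity)
  obtain ⟨δ₂, hδ₂, h₂⟩ := hT (ε / 2) (by positivity)
  refine ⟨min δ₁ δ₂, lt_min hδ₁ hδ₂, fun x hx y hy hxy i => ?_⟩
  have hdiff : ∀ v ∈ ℍ₀, ‖(fun v => G i (x.1, v)) v - (fun v => G i (y.1, v)) v‖
      ≤ ε / (2 * (W + 1)) := fun v hv => by
    rw [← dist_eq_norm]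
    refine (h₁ (x.1, v) ⟨hx.1, hv⟩ (y.1, v) ⟨hy.1, hv⟩ ?_ i).le
    rw [dist_prod_same_right]
    exact (le_max_left _ _).trans_lt (hxy.trans_le (min_le_left _ _))
  -- `T_z g_z w - T_{z'} g_{z'} w' = T_z (g_z - g_{z'}) w + (T_z g_{z'} w - T_{z'} g_{z'} w')`
  have e₁ : dist (transferOpC ν σ (κ i) x.1 s (fun v => G i (x.1, v)) x.2)
      (transferOpC ν σ (κ i) x.1 s (fun v => G i (y.1, v)) x.2) ≤ ε / (2 * (W + 1)) * W := by
    rw [dist_eq_norm, hν.transferOpC_sub hs0 hs1 σ (g := fun v => G i (x.1, v))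
      (g' := fun v => G i (y.1, v)) (hsliceM (i, ⟨x.1, hx.1⟩)) (hsliceM (i, ⟨y.1, hy.1⟩))
      (hslice.uniformContinuousOn (i, ⟨x.1, hx.1⟩)) (hslice.uniformContinuousOn (i, ⟨y.1, hy.1⟩))
      hx (κ i)]
    exact hν.norm_transferOpC_le hs0.le hs1 σ hdiff hx (κ i)
  have e₂ := h₂ x hx y hy (hxy.trans_le (min_le_right _ _)) (i, ⟨y.1, hy.1⟩)
  have hε₁ : ε / (2 * (W + 1)) * W < ε / 2 := by
    rw [div_mul_eq_mul_div, div_lt_div_iff₀ (by positivity) (by norm_num)]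
    nlinarith
  exact (dist_triangle _ _ _).trans_lt (by simp only at e₂; linarith)

theorem uniformEquicontinuousOn_transferOpC_iterate {B : ℝ} (hν : IsBoundedProbDensity ν C)
    (hs0 : 0 < s) (hs1 : s < 1) (σ : Measure (ℝ × ℝ)) [IsProbabilityMeasure σ] {J : Type*}
    {f : J → ℂ → ℂ} (hfB : ∀ α, ∀ w ∈ ℍ₀, ‖f α w‖ ≤ B)
    (hf : UniformEquicontinuousOn f ℍ₀) (k : ℕ) :
    (∀ i : J × ℝ, ∀ x ∈ ℍ₀ ×ˢ ℍ₀,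
      ‖(transferOpC ν σ i.2 x.1 s)^[k] (f i.1) x.2‖ ≤ B * weightIntegralBound s C ^ k) ∧
    UniformEquicontinuousOn
      (fun (i : J × ℝ) (x : ℂ × ℂ) => (transferOpC ν σ i.2 x.1 s)^[k] (f i.1) x.2)
      (ℍ₀ ×ˢ ℍ₀) := by
  induction k with
  | zero =>
    refine ⟨fun i x hx => by simpa using hfB i.1 x.2 hx.2, ?_⟩
    rw [Metric.uniformEquicontinuousOn_iff] at hf ⊢
    intro ε hε
    obtain ⟨δ, hδ, h⟩ := hf ε hε
    exact ⟨δ, hδ, fun x hx y hy hxy i =>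
      h x.2 hx.2 y.2 hy.2 ((le_max_right _ _).trans_lt hxy) i.1⟩
  | succ k ih =>
    simp only [Function.iterate_succ_apply']
    refine ⟨fun i x hx => ?_, hν.uniformEquicontinuousOn_transferOpC_slice hs0 hs1 σ Prod.snd
      ih.1 ih.2⟩
    rw [pow_succ, ← mul_assoc]
    exact hν.norm_transferOpC_le hs0.le hs1 σ (fun v hv => ih.1 i (x.1, v) ⟨hx.1, hv⟩) hx i.2

end IsBoundedProbDensity

theorem transferOpC_iterate_uniform_continuity_general (ν : ℝ → ℝ)
    (hνnonneg : ∀ q, 0 ≤ ν q)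
    (hνprob : ∫ q : ℝ, ν q = 1)
    (Cν : ℝ) (hνbd : ∀ᵐ q : ℝ, ν q ≤ Cν)
    (σ : Measure (ℝ × ℝ)) [IsProbabilityMeasure σ]
    (s : ℝ) (hs0 : 0 < s) (hs1 : s < 1 / 2) (m : ℕ)
    {J : Type*} (f : J → ℂ → ℂ)
    (B : ℝ) (hfB : ∀ (α : J) (w : ℂ), 0 ≤ w.im → norm (f α w) ≤ B)
    (hequi : ∀ ε : ℝ, 0 < ε → ∃ δ : ℝ, 0 < δ ∧ ∀ (α : J) (w w' : ℂ), 0 ≤ w.im → 0 ≤ w'.im →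
      norm (w - w') < δ → norm (f α w - f α w') < ε) :
    ∀ ε : ℝ, 0 < ε → ∃ ε₀ : ℝ, 0 < ε₀ ∧ ∀ ep : ℝ, 0 < ep → ep < ε₀ →
      ∀ (α : J) (κ E : ℝ), 0 ≤ κ → ∀ w : ℂ, 0 ≤ w.im →
        norm (((transferOpC ν σ κ ((E : ℂ) + ep * Complex.I) s)^[m] (f α)) w
          - ((transferOpC ν σ κ (E : ℂ) s)^[m] (f α)) w) ≤ ε := by
  have hν : IsBoundedProbDensity ν Cν := ⟨hνnonneg, hνprob, hνbd⟩
  have hf : UniformEquicontinuousOn f ℍ₀ := by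
    refine Metric.uniformEquicontinuousOn_iff.2 fun ε hε => ?_
    obtain ⟨δ, hδ, h⟩ := hequi ε hε
    exact ⟨δ, hδ, fun w hw w' hw' hww' α => by
      simpa only [dist_eq_norm] using h α w w' hw hw' (by rwa [← dist_eq_norm])⟩
  intro ε hε
  obtain ⟨δ, hδ, h⟩ := Metric.uniformEquicontinuousOn_iff.1
    (hν.uniformEquicontinuousOn_transferOpC_iterate hs0 (by linarith) σ hfB hf m).2 ε hε
  refine ⟨δ, hδ, fun ep hep hlt α κ E _ w hw => ?_⟩
  have := h ((E : ℂ) + ep * Complex.I, w) ⟨by simpa using hep.le, hw⟩ ((E : ℂ), w) ⟨by simp, hw⟩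
    (by simpa [Prod.dist_eq, dist_eq_norm, abs_of_pos hep] using And.intro hlt hδ) (α, κ)
  rw [dist_eq_norm] at this
  exact this.le

/-- Lemma 3.4(iii) of the paper: for an equicontinuous, uniformly bounded family
`{f_α : α ∈ J}` on the closed upper half-plane, the supremum norm of
`(T_{κ,E+iε,s}^m − T_{κ,E,s}^m) f_α` tends to `0` as `ε ↓ 0`, uniformly in `α`, `κ ≥ 0` and
`E ∈ ℝ`. -/
theorem transferOpC_iterate_uniform_continuity (K : ℝ) (hK : 0 < K) (ν : ℝ → ℝ)
    (hνmeas : Measurable ν) (hνnonneg : ∀ q, 0 ≤ ν q)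
    (hνsupp : ∀ q, q ∉ Set.Icc (-K) K → ν q = 0)
    (hνprob : ∫ q : ℝ, ν q = 1)
    (Cν : ℝ) (hνbd : ∀ᵐ q : ℝ, ν q ≤ Cν)
    (σ : Measure (ℝ × ℝ)) [IsProbabilityMeasure σ]
    (hσsupp : σ {p : ℝ × ℝ | ¬(|p.1| ≤ 1 ∧ |p.2| ≤ 1)} = 0)
    (s : ℝ) (hs0 : 0 < s) (hs1 : s < 1 / 2) (m : ℕ) (hm : 0 < m)
    {J : Type*} (f : J → ℂ → ℂ)
    (B : ℝ) (hfB : ∀ (α : J) (w : ℂ), 0 ≤ w.im → norm (f α w) ≤ B)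
    (hequi : ∀ ε : ℝ, 0 < ε → ∃ δ : ℝ, 0 < δ ∧ ∀ (α : J) (w w' : ℂ), 0 ≤ w.im → 0 ≤ w'.im →
      norm (w - w') < δ → norm (f α w - f α w') < ε) :
    ∀ ε : ℝ, 0 < ε → ∃ ε₀ : ℝ, 0 < ε₀ ∧ ∀ ep : ℝ, 0 < ep → ep < ε₀ →
      ∀ (α : J) (κ E : ℝ), 0 ≤ κ → ∀ w : ℂ, 0 ≤ w.im →
        norm (((transferOpC ν σ κ ((E : ℂ) + ep * Complex.I) s)^[m] (f α)) w
          - ((transferOpC ν σ κ (E : ℂ) s)^[m] (f α)) w) ≤ ε :=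
  transferOpC_iterate_uniform_continuity_general ν hνnonneg hνprob Cν hνbd σ s hs0 hs1 m f B hfB
    hequi
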